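/- Fix ε₀ > 0 sufficiently small and set α := 1 + ε₀ and ε₁ := ε₀²/18. Define λ_q := ⌊λ₀^{α^q}⌋, δ_q := λ_q^{−2/5+2ε₀}, μ_{q+1} := δ_q^{1/4} δ_{q+1}^{1/4} λ_q^{1/2} λ_{q+1}^{1/2}, and ℓ_{q+1} := λ_{q+1}^{−1+ε₁}. Then there exists a constant C such that for all sufficiently large λ₀ and all q ∈ ℕ: δ_{q+1}^{1/2} μ_{q+1} ℓ_{q+1} λ_{q+1}^{2ε₁} ≤ C λ_q^{−2/5 + (6/5)ε₀ + (5/3)ε₀² + (1/6)ε₀³} ≤ C δ_{q+2} λ_q^{−ε₀²}; in particular, for λ₀ sufficiently large, δ_{q+1}^{1/2} μ_{q+1} ℓ_{q+1} λ_{q+1}^{2ε₁} ≤ δ_{q+2} for all q. -/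

import Mathlib

open scoped BigOperators

noncomputable section

/-- `λ_q := ⌊λ₀^{(1+ε₀)^q}⌋`. -/
def lamP (l₀ ε₀ : ℝ) (q : ℕ) : ℝ := ((⌊l₀ ^ ((1 + ε₀) ^ q)⌋ : ℤ) : ℝ)

/-- `δ_q := λ_q^{−2/5+2ε₀}`. -/
def delP (l₀ ε₀ : ℝ) (q : ℕ) : ℝ := lamP l₀ ε₀ q ^ (-(2 : ℝ)/5 + 2 * ε₀)

/-- `μ_{q+1} := δ_q^{1/4} δ_{q+1}^{1/4} λ_q^{1/2} λ_{q+1}^{1/2}`. -/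
def muS (l₀ ε₀ : ℝ) (q : ℕ) : ℝ :=
  delP l₀ ε₀ q ^ ((1 : ℝ)/4) * delP l₀ ε₀ (q + 1) ^ ((1 : ℝ)/4)
    * lamP l₀ ε₀ q ^ ((1 : ℝ)/2) * lamP l₀ ε₀ (q + 1) ^ ((1 : ℝ)/2)

/-- `ℓ_{q+1} := λ_{q+1}^{−1+ε₁}` with `ε₁ = ε₀²/18`. -/
def ellS (l₀ ε₀ : ℝ) (q : ℕ) : ℝ := lamP l₀ ε₀ (q + 1) ^ (-(1 : ℝ) + ε₀ ^ 2 / 18)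

/-
Write `x = λ_q`, `y = λ_{q+1}`, `z = λ_{q+2}` and `α = 1 + ε₀`. The left-hand side is a monomial
`x ^ (2/5 + ε₀/2) * y ^ (-4/5 + 3/2 ε₀ + ε₀²/6)` with a negative power of `y`, and the floor
costs at most a factor `2` in `x ^ α ≤ 2 y` and `z ≤ (2 x) ^ α²`. So everything is a power of `x`
up to factors of `2`: the left-hand side is at most `2 x ^ E` with `E` the exponent in the
statement, and `δ_{q+2} λ_q^{-ε₀²}` is at least `x ^ (E + c) / 2` with
`c = 14/15 ε₀² + 11/6 ε₀³ > 0`. Taking `λ₀` so large that `x ^ c ≥ 4` absorbs the constants.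
-/

lemma le_two_mul_floor {t : ℝ} (ht : 1 ≤ t) : t ≤ 2 * (⌊t⌋ : ℝ) := by
  have h₁ : (1 : ℝ) ≤ ⌊t⌋ := by exact_mod_cast Int.floor_pos.mpr ht
  linarith [Int.lt_floor_add_one t]

lemma rpow_le_two_mul_rpow {u v a : ℝ} (hu : 0 < u) (huv : u ≤ 2 * v) (ha : -1 ≤ a)
    (ha₀ : a ≤ 0) : v ^ a ≤ 2 * u ^ a := by
  have h₂ : (2 : ℝ) ^ (-a) ≤ 2 := by
    simpa using Real.rpow_le_rpow_of_exponent_le one_le_two (show -a ≤ 1 by linarith)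
  calc v ^ a ≤ (u / 2) ^ a := Real.rpow_le_rpow_of_nonpos (by positivity) (by linarith) ha₀
    _ = 2 ^ (-a) * u ^ a := by
      rw [Real.div_rpow hu.le zero_le_two, Real.rpow_neg zero_le_two]; ring
    _ ≤ 2 * u ^ a := by gcongr

lemma le_rpow_pow {x a : ℝ} (hx : 1 ≤ x) (ha : 1 ≤ a) (q : ℕ) : x ≤ x ^ (a ^ q) := by
  simpa using Real.rpow_le_rpow_of_exponent_le hx (one_le_pow₀ ha)

lemma rpow_pow_add {x : ℝ} (hx : 0 ≤ x) (a : ℝ) (q k : ℕ) :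
    x ^ (a ^ (q + k)) = (x ^ (a ^ q)) ^ (a ^ k) := by
  rw [pow_add, Real.rpow_mul hx]

section lamP

variable {l₀ ε₀ : ℝ}

lemma sub_one_le_lamP (hl : 1 ≤ l₀) (hε : 0 ≤ ε₀) (q : ℕ) : l₀ - 1 ≤ lamP l₀ ε₀ q := by
  unfold lamP
  linarith [Int.lt_floor_add_one (l₀ ^ ((1 + ε₀) ^ q)),
    le_rpow_pow hl (le_add_of_nonneg_right hε) q]

lemma one_le_lamP (hl : 2 ≤ l₀) (hε : 0 ≤ ε₀) (q : ℕ) : 1 ≤ lamP l₀ ε₀ q := by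
  linarith [sub_one_le_lamP (by linarith : (1 : ℝ) ≤ l₀) hε q]

lemma lamP_pos (hl : 2 ≤ l₀) (hε : 0 ≤ ε₀) (q : ℕ) : 0 < lamP l₀ ε₀ q :=
  one_pos.trans_le (one_le_lamP hl hε q)

lemma rpow_le_two_mul_lamP (hl : 1 ≤ l₀) (hε : 0 ≤ ε₀) (q : ℕ) :
    l₀ ^ ((1 + ε₀) ^ q) ≤ 2 * lamP l₀ ε₀ q :=
  le_two_mul_floor (hl.trans (le_rpow_pow hl (le_add_of_nonneg_right hε) q))

lemma lamP_le_rpow (l₀ ε₀ : ℝ) (q : ℕ) : lamP l₀ ε₀ q ≤ l₀ ^ ((1 + ε₀) ^ q) :=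
  Int.floor_le _

lemma lamP_rpow_le_two_mul_lamP_succ (hl : 2 ≤ l₀) (hε : 0 ≤ ε₀) (q : ℕ) :
    lamP l₀ ε₀ q ^ (1 + ε₀) ≤ 2 * lamP l₀ ε₀ (q + 1) :=
  calc lamP l₀ ε₀ q ^ (1 + ε₀) ≤ (l₀ ^ ((1 + ε₀) ^ q)) ^ (1 + ε₀) :=
        Real.rpow_le_rpow (lamP_pos hl hε q).le (lamP_le_rpow l₀ ε₀ q) (by linarith)
    _ = l₀ ^ ((1 + ε₀) ^ (q + 1)) := by rw [rpow_pow_add (by linarith), pow_one]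
    _ ≤ 2 * lamP l₀ ε₀ (q + 1) := rpow_le_two_mul_lamP (by linarith) hε (q + 1)

lemma lamP_add_le (hl : 2 ≤ l₀) (hε : 0 ≤ ε₀) (q k : ℕ) :
    lamP l₀ ε₀ (q + k) ≤ (2 * lamP l₀ ε₀ q) ^ ((1 + ε₀) ^ k) :=
  calc lamP l₀ ε₀ (q + k) ≤ (l₀ ^ ((1 + ε₀) ^ q)) ^ ((1 + ε₀) ^ k) := by
        rw [← rpow_pow_add (by linarith)]; exact lamP_le_rpow l₀ ε₀ (q + k)
    _ ≤ (2 * lamP l₀ ε₀ q) ^ ((1 + ε₀) ^ k) :=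
        Real.rpow_le_rpow (by positivity) (rpow_le_two_mul_lamP (by linarith) hε q)
          (by positivity)

lemma reynolds_term_eq (hl : 2 ≤ l₀) (hε : 0 ≤ ε₀) (q : ℕ) :
    delP l₀ ε₀ (q + 1) ^ ((1 : ℝ)/2) * muS l₀ ε₀ q * ellS l₀ ε₀ q
        * lamP l₀ ε₀ (q + 1) ^ (2 * (ε₀ ^ 2 / 18))
      = lamP l₀ ε₀ q ^ (2/5 + ε₀/2 : ℝ)
        * lamP l₀ ε₀ (q + 1) ^ (-4/5 + 3/2 * ε₀ + ε₀ ^ 2 / 6 : ℝ) := by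
  have hx := lamP_pos hl hε q
  have hy := lamP_pos hl hε (q + 1)
  simp only [delP, muS, ellS, ← Real.rpow_mul hx.le, ← Real.rpow_mul hy.le]
  rw [show (2/5 + ε₀/2 : ℝ) = (-2/5 + 2 * ε₀) * (1/4) + 1/2 by ring,
    show (-4/5 + 3/2 * ε₀ + ε₀ ^ 2 / 6 : ℝ) = (-2/5 + 2 * ε₀) * (1/2)
      + (-2/5 + 2 * ε₀) * (1/4) + 1/2 + (-1 + ε₀ ^ 2 / 18) + 2 * (ε₀ ^ 2 / 18) by ring]
  simp only [Real.rpow_add hx, Real.rpow_add hy]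
  ring

lemma reynolds_term_le (hl : 2 ≤ l₀) (hε : 0 ≤ ε₀) (hε' : ε₀ ≤ 1/10) (q : ℕ) :
    delP l₀ ε₀ (q + 1) ^ ((1 : ℝ)/2) * muS l₀ ε₀ q * ellS l₀ ε₀ q
        * lamP l₀ ε₀ (q + 1) ^ (2 * (ε₀ ^ 2 / 18))
      ≤ 2 * lamP l₀ ε₀ q ^ (-(2 : ℝ)/5 + 6/5 * ε₀ + 5/3 * ε₀ ^ 2 + 1/6 * ε₀ ^ 3) := by
  have hx := lamP_pos hl hε q
  have hy : lamP l₀ ε₀ (q + 1) ^ (-4/5 + 3/2 * ε₀ + ε₀ ^ 2 / 6 : ℝ)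
      ≤ 2 * (lamP l₀ ε₀ q ^ (1 + ε₀)) ^ (-4/5 + 3/2 * ε₀ + ε₀ ^ 2 / 6 : ℝ) :=
    rpow_le_two_mul_rpow (by positivity) (lamP_rpow_le_two_mul_lamP_succ hl hε q)
      (by nlinarith) (by nlinarith)
  rw [← Real.rpow_mul hx.le] at hy
  rw [reynolds_term_eq hl hε]
  calc _ ≤ lamP l₀ ε₀ q ^ (2/5 + ε₀/2 : ℝ)
        * (2 * lamP l₀ ε₀ q ^ ((1 + ε₀) * (-4/5 + 3/2 * ε₀ + ε₀ ^ 2 / 6))) := by gcongr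
    _ = _ := by
      rw [mul_left_comm, ← Real.rpow_add hx]; ring_nf

lemma lamP_rpow_le_two_mul_delP_add_two (hl : 2 ≤ l₀) (hε : 0 ≤ ε₀) (hε' : ε₀ ≤ 1/10)
    (q : ℕ) : lamP l₀ ε₀ q ^ ((1 + ε₀) ^ 2 * (-2/5 + 2 * ε₀)) ≤ 2 * delP l₀ ε₀ (q + 2) := by
  have hx := lamP_pos hl hε q
  have hβ : (-2/5 + 2 * ε₀ : ℝ) ≤ 0 := by linarith
  calc lamP l₀ ε₀ q ^ ((1 + ε₀) ^ 2 * (-2/5 + 2 * ε₀))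
      ≤ 2 * (2 * lamP l₀ ε₀ q) ^ ((1 + ε₀) ^ 2 * (-2/5 + 2 * ε₀)) :=
        rpow_le_two_mul_rpow (by positivity) le_rfl (by nlinarith)
          (mul_nonpos_of_nonneg_of_nonpos (by positivity) hβ)
    _ = 2 * ((2 * lamP l₀ ε₀ q) ^ ((1 + ε₀) ^ 2)) ^ (-2/5 + 2 * ε₀ : ℝ) := by
        rw [Real.rpow_mul (by positivity)]
    _ ≤ 2 * delP l₀ ε₀ (q + 2) := by
        gcongr
        exact Real.rpow_le_rpow_of_nonpos (lamP_pos hl hε _) (lamP_add_le hl hε q 2) hβ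

lemma two_mul_rpow_le_delP_mul_rpow (hl : 2 ≤ l₀) (hε : 0 ≤ ε₀) (hε' : ε₀ ≤ 1/10) (q : ℕ)
    (hlarge : 4 ≤ lamP l₀ ε₀ q ^ (14/15 * ε₀ ^ 2 + 11/6 * ε₀ ^ 3)) :
    2 * lamP l₀ ε₀ q ^ (-(2 : ℝ)/5 + 6/5 * ε₀ + 5/3 * ε₀ ^ 2 + 1/6 * ε₀ ^ 3)
      ≤ delP l₀ ε₀ (q + 2) * lamP l₀ ε₀ q ^ (-(ε₀ ^ 2)) := by
  have hx := lamP_pos hl hε q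
  have hsplit : lamP l₀ ε₀ q ^ (-(2 : ℝ)/5 + 6/5 * ε₀ + 5/3 * ε₀ ^ 2 + 1/6 * ε₀ ^ 3)
        * lamP l₀ ε₀ q ^ (14/15 * ε₀ ^ 2 + 11/6 * ε₀ ^ 3)
      = lamP l₀ ε₀ q ^ ((1 + ε₀) ^ 2 * (-2/5 + 2 * ε₀)) * lamP l₀ ε₀ q ^ (-(ε₀ ^ 2)) := by
    rw [← Real.rpow_add hx, ← Real.rpow_add hx]; ring_nf
  have hz := lamP_rpow_le_two_mul_delP_add_two hl hε hε' q
  have hE := Real.rpow_nonneg hx.le (-(2 : ℝ)/5 + 6/5 * ε₀ + 5/3 * ε₀ ^ 2 + 1/6 * ε₀ ^ 3)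
  have hε₂ := Real.rpow_nonneg hx.le (-(ε₀ ^ 2))
  have h4 : 4 * lamP l₀ ε₀ q ^ (-(2 : ℝ)/5 + 6/5 * ε₀ + 5/3 * ε₀ ^ 2 + 1/6 * ε₀ ^ 3)
      ≤ 2 * (delP l₀ ε₀ (q + 2) * lamP l₀ ε₀ q ^ (-(ε₀ ^ 2))) :=
    calc _ ≤ lamP l₀ ε₀ q ^ (14/15 * ε₀ ^ 2 + 11/6 * ε₀ ^ 3)
          * lamP l₀ ε₀ q ^ (-(2 : ℝ)/5 + 6/5 * ε₀ + 5/3 * ε₀ ^ 2 + 1/6 * ε₀ ^ 3) :=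
          mul_le_mul_of_nonneg_right hlarge hE
      _ = lamP l₀ ε₀ q ^ ((1 + ε₀) ^ 2 * (-2/5 + 2 * ε₀)) * lamP l₀ ε₀ q ^ (-(ε₀ ^ 2)) := by
          rw [mul_comm, hsplit]
      _ ≤ 2 * delP l₀ ε₀ (q + 2) * lamP l₀ ε₀ q ^ (-(ε₀ ^ 2)) :=
          mul_le_mul_of_nonneg_right hz hε₂
      _ = _ := by ring
  linarith

end lamP

/-- **The key smallness estimate for the Reynolds stress** (Section 7 of the paper):
`δ_{q+1}^{1/2} μ_{q+1} ℓ_{q+1} λ_{q+1}^{2ε₁}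
  ≤ C λ_q^{−2/5 + (6/5)ε₀ + (5/3)ε₀² + (1/6)ε₀³} ≤ C δ_{q+2} λ_q^{−ε₀²}`;
in particular, for `λ₀` sufficiently large, the left-hand side is `≤ δ_{q+2}`. -/
theorem reynolds_smallness :
    ∃ ε' : ℝ, 0 < ε' ∧ ∀ ε₀ : ℝ, 0 < ε₀ → ε₀ < ε' →
    ∃ C : ℝ, 0 < C ∧ ∃ Λ₀ : ℝ, ∀ l₀ : ℝ, Λ₀ ≤ l₀ → ∀ q : ℕ,
      delP l₀ ε₀ (q + 1) ^ ((1 : ℝ)/2) * muS l₀ ε₀ q * ellS l₀ ε₀ q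
          * lamP l₀ ε₀ (q + 1) ^ (2 * (ε₀ ^ 2 / 18))
        ≤ C * lamP l₀ ε₀ q
            ^ (-(2 : ℝ)/5 + 6/5 * ε₀ + 5/3 * ε₀ ^ 2 + 1/6 * ε₀ ^ 3) ∧
      C * lamP l₀ ε₀ q ^ (-(2 : ℝ)/5 + 6/5 * ε₀ + 5/3 * ε₀ ^ 2 + 1/6 * ε₀ ^ 3)
        ≤ C * (delP l₀ ε₀ (q + 2) * lamP l₀ ε₀ q ^ (-(ε₀ ^ 2))) ∧
      delP l₀ ε₀ (q + 1) ^ ((1 : ℝ)/2) * muS l₀ ε₀ q * ellS l₀ ε₀ q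
          * lamP l₀ ε₀ (q + 1) ^ (2 * (ε₀ ^ 2 / 18))
        ≤ delP l₀ ε₀ (q + 2) := by
  refine ⟨1/10, by norm_num, fun ε₀ hε hε' => ?_⟩
  set c : ℝ := 14/15 * ε₀ ^ 2 + 11/6 * ε₀ ^ 3
  have hc : 0 < c := by positivity
  refine ⟨2, two_pos, 4 ^ c⁻¹ + 1, fun l₀ hl₀ q => ?_⟩
  have hl : 2 ≤ l₀ := by linarith [Real.one_le_rpow (by norm_num : (1 : ℝ) ≤ 4) (inv_pos.2 hc).le]
  have hx := one_le_lamP hl hε.le q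
  have hlarge : 4 ≤ lamP l₀ ε₀ q ^ c :=
    (Real.rpow_inv_le_iff_of_pos (by norm_num : (0 : ℝ) ≤ 4) (zero_le_one.trans hx) hc).1
      (by linarith [sub_one_le_lamP (by linarith : (1 : ℝ) ≤ l₀) hε.le q])
  have hterm := reynolds_term_le hl hε.le hε'.le q
  have hkey := two_mul_rpow_le_delP_mul_rpow hl hε.le hε'.le q hlarge
  have hδ : 0 ≤ delP l₀ ε₀ (q + 2) * lamP l₀ ε₀ q ^ (-(ε₀ ^ 2)) :=
    mul_nonneg (Real.rpow_nonneg (lamP_pos hl hε.le _).le _) (Real.rpow_nonneg (by linarith) _)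
  refine ⟨hterm, by linarith, hterm.trans (hkey.trans ?_)⟩
  exact mul_le_of_le_one_right (Real.rpow_nonneg (lamP_pos hl hε.le _).le _)
    (Real.rpow_le_one_of_one_le_of_nonpos hx (neg_nonpos.2 (sq_nonneg ε₀)))
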